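/- arXiv:1305.5122 — 3 statements merged into one kernel-verified Lean document; each statement's English description precedes it below -/
import Mathlib

section
/- For any odd positive integer k, the following q-series identity holds for |q| < 1: 2 ∑_{n odd, n≥1} λ_k(n) q^n = ∑_{ℓ=0}^∞ (2ℓ+1)^k (q^{(2ℓ+1)²} + q^{(2ℓ+1)² + 2(2ℓ+1)}) / (1 − q^{2(2ℓ+1)}). -/
/-!
Since `2 λ_k(n) = ∑_{de = n} min(d, e)^k`, the left-hand side is the sum of `min(d, e)^k q^{de}`
over all ordered pairs `(d, e)` of odd positive integers. Grouped by `m = min(d, e)`, these pairs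
are `(m, m + 2t)` and `(m + 2t + 2, m)` for `t ≥ 0`, which contribute the geometric series
`m^k q^{m²} ∑_t q^{2mt}` and `m^k q^{m² + 2m} ∑_t q^{2mt}`. The regrouping is justified by
absolute convergence: `min(d, e)^k |q|^{de} ≤ d^k |q|^d · (|q|²)^{(e-1)/2}`.
-/

open scoped BigOperators

/-- `λ_k(n) = (1/2) ∑_{d ∣ n} min(d, n/d)^k`. -/
def lambdaFn (k n : ℕ) : ℚ := (1/2) * ∑ d ∈ n.divisors, (min d (n / d) : ℚ) ^ k

section Regrouping

variable {E : Type*} [NormedAddCommGroup E] [CompleteSpace E]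

def oddPairEquiv : ℕ × ℕ ≃ Σ m : ℕ, (2 * m + 1).divisorsAntidiagonal where
  toFun p := ⟨2 * p.1 * p.2 + p.1 + p.2, (2 * p.1 + 1, 2 * p.2 + 1), by
    rw [Nat.mem_divisorsAntidiagonal]; exact ⟨by ring, by omega⟩⟩
  invFun x := (x.2.1.1 / 2, x.2.1.2 / 2)
  left_inv p := by ext <;> dsimp only <;> omega
  right_inv := by
    rintro ⟨m, ⟨d, e⟩, hde⟩
    obtain ⟨hde, -⟩ := Nat.mem_divisorsAntidiagonal.1 hde
    obtain ⟨⟨a, rfl⟩, ⟨b, rfl⟩⟩ : Odd d ∧ Odd e := Nat.odd_mul.1 (hde ▸ odd_two_mul_add_one m)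
    obtain rfl : 2 * a * b + a + b = m := by linarith
    have half : ∀ c, (2 * c + 1) / 2 = c := by omega
    apply Sigma.subtype_ext <;> simp only [half]

theorem Summable.tsum_odd_prod_eq_tsum_sum_divisorsAntidiagonal {f : ℕ × ℕ → E}
    (hf : Summable fun p : ℕ × ℕ ↦ f (2 * p.1 + 1, 2 * p.2 + 1)) :
    ∑' p : ℕ × ℕ, f (2 * p.1 + 1, 2 * p.2 + 1)
      = ∑' m : ℕ, ∑ p ∈ (2 * m + 1).divisorsAntidiagonal, f p := by
  have hσ : Summable fun x : Σ m : ℕ, (2 * m + 1).divisorsAntidiagonal ↦ f x.2 :=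
    oddPairEquiv.summable_iff.1 hf
  calc ∑' p : ℕ × ℕ, f (2 * p.1 + 1, 2 * p.2 + 1)
      = ∑' x : Σ m : ℕ, (2 * m + 1).divisorsAntidiagonal, f x.2 :=
        oddPairEquiv.tsum_eq fun x ↦ f x.2
    _ = _ := by
      rw [hσ.tsum_sigma]
      exact tsum_congr fun m ↦ Finset.tsum_subtype _ f

def minSplitEquiv : ℕ × (ℕ ⊕ ℕ) ≃ ℕ × ℕ where
  toFun
    | (l, .inl t) => (l, l + t)
    | (l, .inr t) => (l + t + 1, l)
  invFun p := if p.1 ≤ p.2 then (p.1, .inl (p.2 - p.1)) else (p.2, .inr (p.1 - p.2 - 1))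
  left_inv := by
    rintro ⟨l, t | t⟩
    · simp
    · simp only [if_neg (show ¬l + t + 1 ≤ l by omega)]; congr 2; omega
  right_inv := by
    rintro ⟨a, b⟩
    by_cases h : a ≤ b
    · simp only [if_pos h]; congr 1; omega
    · simp only [if_neg h]; congr 1; omega

theorem Summable.tsum_prod_eq_tsum_add_tsum_min {f : ℕ × ℕ → E} (hf : Summable f) :
    ∑' p, f p = ∑' l, (∑' t, f (l, l + t) + ∑' t, f (l + t + 1, l)) := by
  rw [← minSplitEquiv.tsum_eq, Summable.tsum_prod (f := fun c ↦ f (minSplitEquiv c))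
    (minSplitEquiv.summable_iff.2 hf)]
  refine tsum_congr fun l ↦ Summable.tsum_sum ?_ ?_
  · exact hf.comp_injective fun s t h ↦ by simp_all [minSplitEquiv]
  · exact hf.comp_injective fun s t h ↦ by simp_all [minSplitEquiv]

end Regrouping

theorem two_mul_lambdaFn (k n : ℕ) :
    2 * lambdaFn k n = ∑ p ∈ n.divisorsAntidiagonal, ((min p.1 p.2 : ℕ) : ℚ) ^ k := by
  rw [lambdaFn, ← mul_assoc, show (2 : ℚ) * (1 / 2) = 1 by norm_num, one_mul,
    Nat.sum_divisorsAntidiagonal fun a b ↦ ((min a b : ℕ) : ℚ) ^ k]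
  refine Finset.sum_congr rfl fun d hd ↦ ?_
  rw [Nat.cast_min, Nat.cast_div_charZero (Nat.dvd_of_mem_divisors hd)]

noncomputable def lambdaTerm (k : ℕ) (q : ℂ) (p : ℕ × ℕ) : ℂ :=
  ((min p.1 p.2 : ℕ) : ℂ) ^ k * q ^ (p.1 * p.2)

theorem sum_divisorsAntidiagonal_lambdaTerm (k n : ℕ) (q : ℂ) :
    ∑ p ∈ n.divisorsAntidiagonal, lambdaTerm k q p = 2 * (lambdaFn k n : ℂ) * q ^ n := by
  have h := congrArg (Rat.cast : ℚ → ℂ) (two_mul_lambdaFn k n)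
  simp only [Rat.cast_mul, Rat.cast_sum, Rat.cast_pow, Rat.cast_natCast, Rat.cast_ofNat] at h
  rw [h, Finset.sum_mul]
  refine Finset.sum_congr rfl fun p hp ↦ ?_
  rw [lambdaTerm, (Nat.mem_divisorsAntidiagonal.1 hp).1]

theorem summable_lambdaTerm_odd (k : ℕ) {q : ℂ} (hq : ‖q‖ < 1) :
    Summable fun p : ℕ × ℕ ↦ lambdaTerm k q (2 * p.1 + 1, 2 * p.2 + 1) := by
  set r := ‖q‖
  have hr0 : 0 ≤ r := norm_nonneg q
  have hr : ‖r‖ < 1 := by rwa [Real.norm_of_nonneg hr0]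
  have hmajor : Summable fun p : ℕ × ℕ ↦
      ((2 * p.1 + 1 : ℕ) : ℝ) ^ k * r ^ (2 * p.1 + 1) * (r ^ 2) ^ p.2 :=
    Summable.mul_of_nonneg
      ((summable_pow_mul_geometric_of_norm_lt_one k hr).comp_injective
        (i := fun a ↦ 2 * a + 1) fun a b h ↦ by simpa using h)
      (summable_geometric_of_lt_one (by positivity) (pow_lt_one₀ hr0 hq two_ne_zero))
      (fun _ ↦ by dsimp; positivity) (fun _ ↦ by positivity)
  refine hmajor.of_norm_bounded fun ⟨a, b⟩ ↦ ?_
  rw [lambdaTerm, norm_mul, norm_pow, norm_pow, Complex.norm_natCast, ← pow_mul, mul_assoc,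
    ← pow_add]
  dsimp only
  gcongr ?_ * ?_
  · gcongr
    exact min_le_left _ _
  · exact pow_le_pow_of_le_one hr0 hq.le (by nlinarith)

theorem lambdaTerm_left_min (k l t : ℕ) (q : ℂ) :
    lambdaTerm k q (2 * l + 1, 2 * (l + t) + 1)
      = ((2 * l + 1 : ℕ) : ℂ) ^ k * q ^ ((2 * l + 1) ^ 2) * (q ^ (2 * (2 * l + 1))) ^ t := by
  rw [lambdaTerm, min_eq_left (by omega), ← pow_mul, mul_assoc, ← pow_add]
  ring_nf

theorem lambdaTerm_right_min (k l t : ℕ) (q : ℂ) :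
    lambdaTerm k q (2 * (l + t + 1) + 1, 2 * l + 1)
      = ((2 * l + 1 : ℕ) : ℂ) ^ k * q ^ ((2 * l + 1) ^ 2 + 2 * (2 * l + 1))
        * (q ^ (2 * (2 * l + 1))) ^ t := by
  rw [lambdaTerm, min_eq_right (by omega), ← pow_mul, mul_assoc, ← pow_add]
  ring_nf

theorem lambda_odd_appell_lerch_general (k : ℕ) (q : ℂ) (hq : ‖q‖ < 1) :
    2 * ∑' m : ℕ, (lambdaFn k (2 * m + 1) : ℂ) * q ^ (2 * m + 1)
      = ∑' l : ℕ, ((2 * l + 1 : ℕ) : ℂ) ^ k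
          * (q ^ ((2 * l + 1) ^ 2) + q ^ ((2 * l + 1) ^ 2 + 2 * (2 * l + 1)))
          / (1 - q ^ (2 * (2 * l + 1))) := by
  have hF := summable_lambdaTerm_odd k hq
  calc 2 * ∑' m : ℕ, (lambdaFn k (2 * m + 1) : ℂ) * q ^ (2 * m + 1)
      = ∑' m : ℕ, ∑ p ∈ (2 * m + 1).divisorsAntidiagonal, lambdaTerm k q p := by
        simp only [← tsum_mul_left, sum_divisorsAntidiagonal_lambdaTerm, mul_assoc]
    _ = ∑' p : ℕ × ℕ, lambdaTerm k q (2 * p.1 + 1, 2 * p.2 + 1) :=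
        hF.tsum_odd_prod_eq_tsum_sum_divisorsAntidiagonal.symm
    _ = ∑' l : ℕ, (∑' t : ℕ, lambdaTerm k q (2 * l + 1, 2 * (l + t) + 1)
          + ∑' t : ℕ, lambdaTerm k q (2 * (l + t + 1) + 1, 2 * l + 1)) :=
        hF.tsum_prod_eq_tsum_add_tsum_min
    _ = _ := tsum_congr fun l ↦ by
        have hr : ‖q ^ (2 * (2 * l + 1))‖ < 1 := by
          rw [norm_pow]; exact pow_lt_one₀ (norm_nonneg q) hq (by omega)
        simp only [lambdaTerm_left_min, lambdaTerm_right_min, tsum_mul_left,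
          tsum_geometric_of_norm_lt_one hr]
        ring

/-- For odd positive `k` and `|q| < 1`:
`2 ∑_{n odd} λ_k(n) q^n = ∑_{ℓ≥0} (2ℓ+1)^k (q^{(2ℓ+1)²} + q^{(2ℓ+1)²+2(2ℓ+1)})/(1 − q^{2(2ℓ+1)})`. -/
theorem lambda_odd_appell_lerch (k : ℕ) (hk : Odd k) (hkpos : 0 < k)
    (q : ℂ) (hq : ‖q‖ < 1) :
    2 * ∑' m : ℕ, (lambdaFn k (2 * m + 1) : ℂ) * q ^ (2 * m + 1)
      = ∑' l : ℕ, ((2 * l + 1 : ℕ) : ℂ) ^ k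
          * (q ^ ((2 * l + 1) ^ 2) + q ^ ((2 * l + 1) ^ 2 + 2 * (2 * l + 1)))
          / (1 - q ^ (2 * (2 * l + 1))) :=
  lambda_odd_appell_lerch_general k q hq
end

section
/- For non-negative integers k, m, ℓ with ℓ ≤ k − m, with c_k := k!·√π/Γ(k+1/2) and b_{k,ℓ,m} := (2k+1)!/((2ℓ)!(2m)!(2(k−ℓ−m)+1)!), the identity ((1/2)^{2(k−ℓ−m)} · b_{k,ℓ,m}) / (c_k · C(k+1/2, m) · C(k−1/2, k−m)) = C(2(k−m)+1, 2ℓ) · (1/4)^{k−ℓ−m} holds, where C(x, s) := Γ(x+1)/(Γ(s+1)Γ(x−s+1)) is the generalized binomial coefficient. -/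
/-! By Legendre's duplication formula, `Γ(n + 1/2) = (2n)! √π / (4ⁿ n!)`. Evaluating every Gamma
factor this way (the two copies of `Γ(k + 1/2)` cancel), the denominator
`c_k C(k + 1/2, m) C(k − 1/2, k − m)` collapses to `(2k+1)! / ((2m)! (2(k−m)+1)!)`; dividing
`b_{k,ℓ,m}` by it leaves `C(2(k−m)+1, 2ℓ)`. -/

open Real

/-- `c_k = k!·√π/Γ(k+1/2)`. -/
noncomputable def ck (k : ℕ) : ℝ :=
  (Nat.factorial k : ℝ) * Real.sqrt Real.pi / Real.Gamma ((k : ℝ) + 1/2)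

/-- Generalized binomial coefficient `C(x, s) = Γ(x+1)/(Γ(s+1)Γ(x−s+1))`. -/
noncomputable def gbinom (x : ℝ) (s : ℕ) : ℝ :=
  Real.Gamma (x + 1) / (Real.Gamma ((s : ℝ) + 1) * Real.Gamma (x - (s : ℝ) + 1))

open Nat

theorem Real.Gamma_nat_add_half_eq_factorial (n : ℕ) :
    Gamma (n + 1 / 2) = (2 * n)! * √π / (4 ^ n * n !) := by
  have h := Gamma_mul_Gamma_add_half ((n : ℝ) + 1 / 2)
  rw [show (n : ℝ) + 1 / 2 + 1 / 2 = n + 1 by ring,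
    show 2 * ((n : ℝ) + 1 / 2) = (2 * n : ℕ) + 1 by push_cast; ring,
    Gamma_nat_eq_factorial, Gamma_nat_eq_factorial,
    show (1 : ℝ) - ((2 * n : ℕ) + 1) = -(2 * n : ℕ) by ring,
    rpow_neg zero_le_two, rpow_natCast, pow_mul] at h
  rw [eq_div_iff (by positivity), mul_left_comm, h]
  field_simp
  norm_num

theorem Real.Gamma_nat_add_half_add_one_eq_factorial (n : ℕ) :
    Gamma (n + 1 / 2 + 1) = (2 * n + 1)! * √π / (2 * 4 ^ n * n !) := by
  rw [Gamma_add_one (by positivity), Gamma_nat_add_half_eq_factorial, factorial_succ]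
  push_cast
  field_simp

theorem ck_mul_gbinom_mul_gbinom (m n : ℕ) :
    ck (m + n) * gbinom ((m + n : ℕ) + 1 / 2) m * gbinom ((m + n : ℕ) - 1 / 2) n
      = (2 * (m + n) + 1)! / ((2 * m)! * (2 * n + 1)!) := by
  simp only [ck, gbinom]
  rw [show ((m + n : ℕ) : ℝ) + 1 / 2 - m + 1 = n + 1 / 2 + 1 by push_cast; ring,
    show ((m + n : ℕ) : ℝ) - 1 / 2 + 1 = (m + n : ℕ) + 1 / 2 by ring,
    show ((m + n : ℕ) : ℝ) - 1 / 2 - n + 1 = m + 1 / 2 by push_cast; ring,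
    Gamma_nat_add_half_add_one_eq_factorial, Gamma_nat_add_half_add_one_eq_factorial, Gamma_nat_add_half_eq_factorial m,
    Gamma_nat_eq_factorial, Gamma_nat_eq_factorial]
  field_simp
  ring

/-- `((1/2)^{2(k−ℓ−m)} b_{k,ℓ,m}) / (c_k C(k+1/2, m) C(k−1/2, k−m)) = C(2(k−m)+1, 2ℓ)(1/4)^{k−ℓ−m}`
for non-negative integers `m ≤ k`, `ℓ ≤ k − m`, where
`b_{k,ℓ,m} = (2k+1)!/((2ℓ)!(2m)!(2(k−ℓ−m)+1)!)`. -/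
theorem multinomial_gamma_quotient (k m l : ℕ) (hm : m ≤ k) (hl : l ≤ k - m) :
    ((1/2 : ℝ) ^ (2 * (k - l - m))
        * ((Nat.factorial (2 * k + 1) : ℝ)
          / (Nat.factorial (2 * l) * Nat.factorial (2 * m)
              * Nat.factorial (2 * (k - l - m) + 1))))
      / (ck k * gbinom ((k : ℝ) + 1/2) m * gbinom ((k : ℝ) - 1/2) (k - m))
      = (Nat.choose (2 * (k - m) + 1) (2 * l) : ℝ) * (1/4 : ℝ) ^ (k - l - m) := by
  obtain ⟨d, rfl⟩ : ∃ d, k = m + (l + d) := ⟨k - m - l, by omega⟩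
  rw [show m + (l + d) - l - m = d by omega, show m + (l + d) - m = l + d by omega,
    ck_mul_gbinom_mul_gbinom, cast_choose ℝ (by omega : 2 * l ≤ 2 * (l + d) + 1),
    show 2 * (l + d) + 1 - 2 * l = 2 * d + 1 by omega, pow_mul]
  field_simp
  ring
end

section
/- For τ in the upper half plane with y = Im(τ) and a positive integer n, the identity ∫_{−τ̄}^{i∞} e^{2πinz} / (−i(z+τ))^{3/2} dz = i (2πn)^{1/2} e^{−2πinτ} Γ(−1/2; 4πny) holds, where the integral is along a path in the upper half plane from −τ̄ to i∞ and Γ(α; x) is the upper incomplete Gamma function. -/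
/-- The upper incomplete Gamma function `Γ(α; x) = ∫ₓ^∞ e^{−t} t^{α−1} dt`. -/
noncomputable def incGamma (a x : ℝ) : ℝ :=
  ∫ t in Set.Ioi x, Real.exp (-t) * t ^ (a - 1)

open MeasureTheory Set

lemma integral_Ioi_comp_add_right (g : ℝ → ℝ) (a d : ℝ) :
    ∫ x in Ioi a, g (x + d) = ∫ x in Ioi (a + d), g x := by
  rw [← integral_indicator measurableSet_Ioi, ← integral_indicator measurableSet_Ioi,
    ← integral_add_right_eq_self (fun x => Set.indicator (Ioi (a + d)) g x) d]
  congr 1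
  ext x
  by_cases h : x ∈ Ioi a
  · rw [Set.indicator_of_mem h, Set.indicator_of_mem (by simpa using h.out)]
  · rw [Set.indicator_of_notMem h, Set.indicator_of_notMem (by simpa using h)]

lemma real_step {c y : ℝ} (hc : 0 < c) (hy : 0 < y) :
    ∫ s in Ioi (0:ℝ), Real.exp (-(c * s)) * (2 * y + s) ^ (-(3:ℝ)/2)
      = Real.exp (2 * c * y) * c ^ ((1:ℝ)/2) * incGamma (-(1/2)) (2 * c * y) := by
  set g : ℝ → ℝ := fun t => Real.exp (-t) * t ^ ((-(1/2) : ℝ) - 1) with hg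
  have step1 : ∫ s in Ioi (0:ℝ), Real.exp (-(c * s)) * (2 * y + s) ^ (-(3:ℝ)/2)
      = Real.exp (2 * c * y) * c ^ ((3:ℝ)/2) * ∫ s in Ioi (0:ℝ), g (c * (s + 2 * y)) := by
    rw [← integral_const_mul]
    refine setIntegral_congr_fun measurableSet_Ioi (fun s hs => ?_)
    have hs' : (0:ℝ) < s := hs
    have h1 : (0:ℝ) < s + 2 * y := by linarith
    simp only [hg]
    rw [Real.mul_rpow hc.le h1.le]
    have he : Real.exp (2 * c * y) * Real.exp (-(c * (s + 2 * y))) = Real.exp (-(c * s)) := by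
      rw [← Real.exp_add]; ring_nf
    have hcc : c ^ ((3:ℝ)/2) * c ^ ((-(1/2):ℝ) - 1) = 1 := by
      rw [← Real.rpow_add hc]; norm_num
    have h3 : ((-(1/2) : ℝ) - 1) = (-(3:ℝ)/2) := by norm_num
    calc Real.exp (-(c * s)) * (2 * y + s) ^ (-(3:ℝ)/2)
        = (Real.exp (2 * c * y) * Real.exp (-(c * (s + 2 * y))))
            * ((c ^ ((3:ℝ)/2) * c ^ ((-(1/2):ℝ) - 1)) * (s + 2 * y) ^ ((-(1/2):ℝ) - 1)) := by
          rw [he, hcc, h3, one_mul]; ring_nf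
      _ = Real.exp (2 * c * y) * c ^ ((3:ℝ)/2)
            * (Real.exp (-(c * (s + 2 * y))) * (c ^ ((-(1/2):ℝ) - 1) * (s + 2 * y) ^ ((-(1/2):ℝ) - 1))) := by
          ring
  rw [step1]
  have step2 : ∫ s in Ioi (0:ℝ), g (c * (s + 2 * y)) = c⁻¹ * incGamma (-(1/2)) (2 * c * y) := by
    have := integral_Ioi_comp_add_right (fun u => g (c * u)) 0 (2 * y)
    simp only [zero_add] at this
    rw [this, integral_comp_mul_left_Ioi g _ hc, smul_eq_mul]
    congr 2
    ring
  rw [step2]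
  have h6 : c ^ ((3:ℝ)/2) * c⁻¹ = c ^ ((1:ℝ)/2) := by
    rw [← Real.rpow_neg_one c, ← Real.rpow_add hc]; norm_num
  calc Real.exp (2 * c * y) * c ^ ((3:ℝ)/2) * (c⁻¹ * incGamma (-(1/2)) (2 * c * y))
      = Real.exp (2 * c * y) * (c ^ ((3:ℝ)/2) * c⁻¹) * incGamma (-(1/2)) (2 * c * y) := by ring
    _ = _ := by rw [h6]

/-- For `τ` in the upper half plane and a positive integer `n`,
`∫_{−τ̄}^{i∞} e^{2πinz}/(−i(z+τ))^{3/2} dz = i(2πn)^{1/2} e^{−2πinτ} Γ(−1/2; 4πny)`,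
the integral taken along the vertical line `z = −τ̄ + is`, `s ∈ (0, ∞)`. -/
theorem vertical_integral_eq_incGamma (τ : ℂ) (hτ : 0 < τ.im) (n : ℕ) (hn : 0 < n) :
    (∫ s in Set.Ioi (0 : ℝ),
        Complex.I * Complex.exp (2 * Real.pi * Complex.I * n
            * (-(starRingEnd ℂ) τ + s * Complex.I))
          / ((-Complex.I * ((-(starRingEnd ℂ) τ + s * Complex.I) + τ)) ^ ((3 : ℂ) / 2)))
      = Complex.I * Real.sqrt (2 * Real.pi * n)
          * Complex.exp (-2 * Real.pi * Complex.I * n * τ)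
          * (incGamma (-(1/2)) (4 * Real.pi * n * τ.im) : ℝ) := by
  set y : ℝ := τ.im with hy
  have hy0 : 0 < y := hτ
  have hn' : (0:ℝ) < (n:ℝ) := by exact_mod_cast hn
  have hc : (0:ℝ) < 2 * Real.pi * (n:ℝ) := by positivity
  set c : ℝ := 2 * Real.pi * (n:ℝ) with hcdef
  set C : ℂ := Complex.exp (2 * Real.pi * Complex.I * n * (-(starRingEnd ℂ) τ)) with hC
  have hconj : τ - (starRingEnd ℂ) τ = 2 * (τ.im : ℂ) * Complex.I := by
    rw [Complex.sub_conj]; push_cast; ring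
  have key : ∀ s ∈ Set.Ioi (0:ℝ),
      Complex.I * Complex.exp (2 * Real.pi * Complex.I * n
            * (-(starRingEnd ℂ) τ + s * Complex.I))
          / ((-Complex.I * ((-(starRingEnd ℂ) τ + s * Complex.I) + τ)) ^ ((3 : ℂ) / 2))
      = Complex.I * C * ((Real.exp (-(c * s)) * (2 * y + s) ^ (-(3:ℝ)/2) : ℝ) : ℂ) := by
    intro s hs
    have hs' : (0:ℝ) < s := hs
    have h1 : (0:ℝ) < 2 * y + s := by linarith
    -- base of the power
    have hbase : -Complex.I * ((-(starRingEnd ℂ) τ + s * Complex.I) + τ)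
        = ((2 * y + s : ℝ) : ℂ) := by
      have hI := Complex.I_sq
      push_cast [hy]
      linear_combination (-Complex.I) * hconj + (-(s:ℂ) - 2 * τ.im) * hI
    have hpow : ((2 * y + s : ℝ) : ℂ) ^ ((3:ℂ)/2)
        = (((2 * y + s) ^ ((3:ℝ)/2) : ℝ) : ℂ) := by
      rw [Complex.ofReal_cpow h1.le]
      norm_num
    -- exponential split
    have hexp : Complex.exp (2 * Real.pi * Complex.I * n
          * (-(starRingEnd ℂ) τ + s * Complex.I))
        = C * ((Real.exp (-(c * s)) : ℝ) : ℂ) := by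
      rw [hC, Complex.ofReal_exp, ← Complex.exp_add]
      congr 1
      push_cast [hcdef]
      have hI := Complex.I_sq
      linear_combination 2 * (Real.pi:ℂ) * (n:ℂ) * (s:ℂ) * hI
    rw [hbase, hpow, hexp]
    rw [show (-(3:ℝ)/2) = -((3:ℝ)/2) by norm_num, Real.rpow_neg h1.le]
    push_cast
    rw [div_eq_mul_inv]
    ring
  rw [setIntegral_congr_fun measurableSet_Ioi key]
  rw [integral_const_mul]
  have hoi : (∫ a in Ioi (0:ℝ), ((Real.exp (-(c * a)) * (2 * y + a) ^ (-(3:ℝ)/2) : ℝ) : ℂ))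
      = ((∫ a in Ioi (0:ℝ), Real.exp (-(c * a)) * (2 * y + a) ^ (-(3:ℝ)/2) : ℝ) : ℂ) :=
    integral_ofReal
  rw [hoi]
  rw [real_step hc hy0]
  have hG : 2 * c * y = 4 * Real.pi * n * y := by rw [hcdef]; ring
  rw [hG]
  have hsqrt : Real.sqrt (2 * Real.pi * n) = c ^ ((1:ℝ)/2) := by
    rw [hcdef, Real.sqrt_eq_rpow]
  have hCe : C * Complex.exp ((4 * Real.pi * n * y : ℝ) : ℂ)
      = Complex.exp (-2 * Real.pi * Complex.I * n * τ) := by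
    rw [hC, ← Complex.exp_add]
    congr 1
    push_cast [hy]
    have hI := Complex.I_sq
    linear_combination 2 * (Real.pi:ℂ) * (n:ℂ) * Complex.I * hconj
      + 4 * (Real.pi:ℂ) * (n:ℂ) * (τ.im:ℂ) * hI
  rw [hsqrt, Complex.ofReal_mul, Complex.ofReal_mul, Complex.ofReal_exp, ← hCe]
  ring
end
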